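/- For all bunches Δ and Δ', we have Δ ≡ Δ' (coherent equivalence) if and only if η(Δ) = η(Δ'); that is, the nestifying translation identifies exactly the coherently equivalent bunches. -/
import Mathlib


namespace BIPaper

/-- Formulas of BI: `φ ::= ⊤ | ⊥ | I | A | φ∧φ | φ∨φ | φ→φ | φ∗φ | φ−∗φ`. -/
inductive Formula : Type where
  | atom (a : ℕ)
  | top
  | bot
  | unit
  | and (φ ψ : Formula)
  | or (φ ψ : Formula)
  | imp (φ ψ : Formula)
  | star (φ ψ : Formula)
  | wand (φ ψ : Formula)
/-- Bunches: `Δ ::= φ | ∅₊ | ∅ₓ | (Δ;Δ) | (Δ,Δ)`. -/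
inductive Bunch : Type where
  | frm (φ : Formula)
  | eplus
  | etimes
  | semi (Δ₁ Δ₂ : Bunch)
  | comma (Δ₁ Δ₂ : Bunch)

/-- Bunched contexts `Δ(·)`: a bunch with a hole, used for sub-bunch replacement. -/
inductive BCtx : Type where
  | hole
  | semiL (C : BCtx) (Δ : Bunch)
  | semiR (Δ : Bunch) (C : BCtx)
  | commaL (C : BCtx) (Δ : Bunch)
  | commaR (Δ : Bunch) (C : BCtx)

/-- Filling the hole of a bunched context. -/
def BCtx.fill : BCtx → Bunch → Bunch
  | .hole, Δ => Δ
  | .semiL C Δ', Δ => .semi (C.fill Δ) Δ'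
  | .semiR Δ' C, Δ => .semi Δ' (C.fill Δ)
  | .commaL C Δ', Δ => .comma (C.fill Δ) Δ'
  | .commaR Δ' C, Δ => .comma Δ' (C.fill Δ)

/-- Coherent equivalence `≡` of bunches: least congruence making
`(; , ∅₊)` and `(, , ∅ₓ)` commutative monoids. -/
inductive BEquiv : Bunch → Bunch → Prop where
  | refl (Δ) : BEquiv Δ Δ
  | symm : BEquiv Δ Δ' → BEquiv Δ' Δ
  | trans : BEquiv Δ₁ Δ₂ → BEquiv Δ₂ Δ₃ → BEquiv Δ₁ Δ₃
  | semiComm (Δ₁ Δ₂) : BEquiv (.semi Δ₁ Δ₂) (.semi Δ₂ Δ₁)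
  | semiAssoc (Δ₁ Δ₂ Δ₃) : BEquiv (.semi (.semi Δ₁ Δ₂) Δ₃) (.semi Δ₁ (.semi Δ₂ Δ₃))
  | semiUnit (Δ) : BEquiv (.semi Δ .eplus) Δ
  | commaComm (Δ₁ Δ₂) : BEquiv (.comma Δ₁ Δ₂) (.comma Δ₂ Δ₁)
  | commaAssoc (Δ₁ Δ₂ Δ₃) : BEquiv (.comma (.comma Δ₁ Δ₂) Δ₃) (.comma Δ₁ (.comma Δ₂ Δ₃))
  | commaUnit (Δ) : BEquiv (.comma Δ .etimes) Δ
  | congr (C : BCtx) : BEquiv Δ Δ' → BEquiv (C.fill Δ) (C.fill Δ')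

/-- The bunched sequent calculus LBI.  `LBI b g Δ φ` means the sequent `Δ ⊢ φ`
is derivable, where the flag `b` permits the `cut` rule (so `LBI true true` is
full LBI and `LBI false true` is cut-free LBI), and the flag `g` permits the
general axiom `Ax : φ ⊢ φ` (the atomic axiom is always available; taking
`g := false` restricts `Ax` to propositional letters). -/
inductive LBI : Bool → Bool → Bunch → Formula → Prop where
  | ax (φ) : LBI b true (.frm φ) φ
  | axAtom (a : ℕ) : LBI b g (.frm (.atom a)) (.atom a)
  | exch : LBI b g Δ φ → BEquiv Δ Δ' → LBI b g Δ' φ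
  | weak (C : BCtx) (Δ'') : LBI b g (C.fill Δ') φ → LBI b g (C.fill (.semi Δ' Δ'')) φ
  | contr (C : BCtx) : LBI b g (C.fill (.semi Δ' Δ')) φ → LBI b g (C.fill Δ') φ
  | botL (C : BCtx) (φ) : LBI b g (C.fill (.frm .bot)) φ
  | topR : LBI b g .eplus .top
  | unitR : LBI b g .etimes .unit
  | unitL (C : BCtx) : LBI b g (C.fill .etimes) φ → LBI b g (C.fill (.frm .unit)) φ
  | andL (C : BCtx) : LBI b g (C.fill (.semi (.frm φ) (.frm ψ))) χ →
      LBI b g (C.fill (.frm (.and φ ψ))) χ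
  | andR : LBI b g Γ φ → LBI b g Δ ψ → LBI b g (.semi Γ Δ) (.and φ ψ)
  | orL (C : BCtx) : LBI b g (C.fill (.frm φ)) χ → LBI b g (C.fill (.frm ψ)) χ →
      LBI b g (C.fill (.frm (.or φ ψ))) χ
  | orR1 : LBI b g Δ φ → LBI b g Δ (.or φ ψ)
  | orR2 : LBI b g Δ ψ → LBI b g Δ (.or φ ψ)
  | impL (C : BCtx) : LBI b g Γ φ → LBI b g (C.fill (.frm ψ)) χ →
      LBI b g (C.fill (.semi Γ (.frm (.imp φ ψ)))) χ
  | impR : LBI b g (.semi Δ (.frm φ)) ψ → LBI b g Δ (.imp φ ψ)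
  | starL (C : BCtx) : LBI b g (C.fill (.comma (.frm φ) (.frm ψ))) χ →
      LBI b g (C.fill (.frm (.star φ ψ))) χ
  | starR : LBI b g Γ φ → LBI b g Δ ψ → LBI b g (.comma Γ Δ) (.star φ ψ)
  | wandL (C : BCtx) : LBI b g Γ φ → LBI b g (C.fill (.frm ψ)) χ →
      LBI b g (C.fill (.comma Γ (.frm (.wand φ ψ)))) χ
  | wandR : LBI b g (.comma Δ (.frm φ)) ψ → LBI b g Δ (.wand φ ψ)
  | cut (C : BCtx) : LBI true g Γ φ → LBI true g (C.fill (.frm φ)) χ →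
      LBI true g (C.fill Γ) χ
/-- Two-sorted nests (with leaves of type `α`), represented as finite-branching
trees whose `plus`/`times` nodes carry lists; lists are regarded as multisets
via the equivalence `NestEq` below, which plays the role of equality of
two-sorted nested multisets. -/
inductive Nest (α : Type) : Type where
  | frm (a : α)
  | plus (l : List (Nest α))
  | times (l : List (Nest α))

variable {α β : Type}

def Nest.flatP : Nest α → List (Nest α)
  | .plus l => l
  | x => [x]

def Nest.flatT : Nest α → List (Nest α)
  | .times l => l
  | x => [x]

/-- Smart additive multiset constructor: merges additive children into the
ambient additive multiset and promotes singletons. -/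
def nplus (l : List (Nest α)) : Nest α :=
  match l.flatMap Nest.flatP with
  | [x] => x
  | l' => .plus l'

/-- Smart multiplicative multiset constructor. -/
def ntimes (l : List (Nest α)) : Nest α :=
  match l.flatMap Nest.flatT with
  | [x] => x
  | l' => .times l'

/-- Nested contexts `Γ{·}`: a nest with a hole inside one of its multisets
(or at the root). -/
inductive NCtx (α : Type) : Type where
  | hole
  | plus (l : List (Nest α)) (C : NCtx α)
  | times (l : List (Nest α)) (C : NCtx α)

/-- Filling the hole of a nested context (with the implicit merging and
promotion in the syntax tree). -/
def NCtx.fill : NCtx α → Nest α → Nest α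
  | .hole, x => x
  | .plus l C, x => nplus (C.fill x :: l)
  | .times l C, x => ntimes (C.fill x :: l)

mutual
/-- Equality of nests qua nested multisets: the lists in the two nests agree
up to permutation, recursively. -/
inductive NestEq : Nest α → Nest α → Prop where
  | frm (a : α) : NestEq (.frm a) (.frm a)
  | plus : NListPerm l l' → NestEq (.plus l) (.plus l')
  | times : NListPerm l l' → NestEq (.times l) (.times l')

inductive NListPerm : List (Nest α) → List (Nest α) → Prop where
  | nil : NListPerm [] []
  | cons : NestEq x y → NListPerm l l' → NListPerm (x :: l) (y :: l')
  | swap : NestEq x x' → NestEq y y' → NListPerm l l' →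
      NListPerm (x :: y :: l) (y' :: x' :: l')
  | trans : NListPerm l₁ l₂ → NListPerm l₂ l₃ → NListPerm l₁ l₃
end

/-- All leaves of a nest satisfy `p`. -/
inductive Nest.All (p : α → Prop) : Nest α → Prop where
  | frm : p a → Nest.All p (.frm a)
  | plus : (∀ x ∈ l, Nest.All p x) → Nest.All p (.plus l)
  | times : (∀ x ∈ l, Nest.All p x) → Nest.All p (.times l)

def Nest.notPlusRoot : Nest α → Prop
  | .plus _ => False
  | _ => True

def Nest.notTimesRoot : Nest α → Prop
  | .times _ => False
  | _ => True

/-- Well-formedness of a nest according to the two-sorted grammar: multisets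
are never singletons, and additive (resp. multiplicative) multisets contain
only formulas and multiplicative (resp. additive) nests. -/
inductive Nest.WF : Nest α → Prop where
  | frm (a : α) : Nest.WF (.frm a)
  | plus : l.length ≠ 1 → (∀ x ∈ l, Nest.WF x) → (∀ x ∈ l, Nest.notPlusRoot x) →
      Nest.WF (.plus l)
  | times : l.length ≠ 1 → (∀ x ∈ l, Nest.WF x) → (∀ x ∈ l, Nest.notTimesRoot x) →
      Nest.WF (.times l)

mutual
/-- Leafwise map of nests. -/
def Nest.map (f : α → β) : Nest α → Nest β
  | .frm a => .frm (f a)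
  | .plus l => .plus (Nest.mapList f l)
  | .times l => .times (Nest.mapList f l)

def Nest.mapList (f : α → β) : List (Nest α) → List (Nest β)
  | [] => []
  | x :: xs => Nest.map f x :: Nest.mapList f xs
end
mutual
/-- The top-level additive components of the nestification of a bunch. -/
def addParts : Bunch → List (Nest Formula)
  | .frm φ => [.frm φ]
  | .eplus => []
  | .etimes => [.times []]
  | .semi Δ₁ Δ₂ => addParts Δ₁ ++ addParts Δ₂
  | .comma Δ₁ Δ₂ => [ntimes (mulParts Δ₁ ++ mulParts Δ₂)]

/-- The top-level multiplicative components of the nestification of a bunch. -/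
def mulParts : Bunch → List (Nest Formula)
  | .frm φ => [.frm φ]
  | .etimes => []
  | .eplus => [.plus []]
  | .comma Δ₁ Δ₂ => mulParts Δ₁ ++ mulParts Δ₂
  | .semi Δ₁ Δ₂ => [nplus (addParts Δ₁ ++ addParts Δ₂)]
end

/-- The nestifying translation `η : B → N`. -/
def eta : Bunch → Nest Formula
  | .frm φ => .frm φ
  | .eplus => .plus []
  | .etimes => .times []
  | .semi Δ₁ Δ₂ => nplus (addParts Δ₁ ++ addParts Δ₂)
  | .comma Δ₁ Δ₂ => ntimes (mulParts Δ₁ ++ mulParts Δ₂)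

mutual
/-- The bunching translation `β : N → B`. -/
def beta : Nest Formula → Bunch
  | .frm φ => .frm φ
  | .plus l => betaP l
  | .times l => betaT l

def betaP : List (Nest Formula) → Bunch
  | [] => .eplus
  | [x] => beta x
  | x :: xs => .semi (beta x) (betaP xs)

def betaT : List (Nest Formula) → Bunch
  | [] => .etimes
  | [x] => beta x
  | x :: xs => .comma (beta x) (betaT xs)
end

section Aux
variable {α : Type}

/-! ### Basic facts about `NestEq` / `NListPerm` -/

mutual
theorem nestEq_refl : (x : Nest α) → NestEq x x
  | .frm a => .frm a
  | .plus l => .plus (nlistPerm_refl l)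
  | .times l => .times (nlistPerm_refl l)
theorem nlistPerm_refl : (l : List (Nest α)) → NListPerm l l
  | [] => .nil
  | x :: xs => .cons (nestEq_refl x) (nlistPerm_refl xs)
end

/-- Mutual induction principle for `NestEq`/`NListPerm`. -/
theorem nest_mutual_ind {P : Nest α → Nest α → Prop} {Q : List (Nest α) → List (Nest α) → Prop}
    (hfrm : ∀ a : α, P (.frm a) (.frm a))
    (hplus : ∀ l l', NListPerm l l' → Q l l' → P (.plus l) (.plus l'))
    (htimes : ∀ l l', NListPerm l l' → Q l l' → P (.times l) (.times l'))
    (hnil : Q [] [])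
    (hcons : ∀ x y l l', NestEq x y → NListPerm l l' → P x y → Q l l' → Q (x :: l) (y :: l'))
    (hswap : ∀ x x' y y' l l', NestEq x x' → NestEq y y' → NListPerm l l' →
      P x x' → P y y' → Q l l' → Q (x :: y :: l) (y' :: x' :: l'))
    (htrans : ∀ l₁ l₂ l₃, NListPerm l₁ l₂ → NListPerm l₂ l₃ → Q l₁ l₂ → Q l₂ l₃ → Q l₁ l₃) :
    (∀ x y, NestEq x y → P x y) ∧ (∀ l l', NListPerm l l' → Q l l') := by
  constructor
  · intro x y h
    refine NestEq.rec (motive_1 := fun x y _ => P x y) (motive_2 := fun l l' _ => Q l l')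
      ?_ ?_ ?_ ?_ ?_ ?_ ?_ h
    · exact hfrm
    · intro l l' p hq; exact hplus l l' p hq
    · intro l l' p hq; exact htimes l l' p hq
    · exact hnil
    · intro x y l l' he p hp hq; exact hcons x y l l' he p hp hq
    · intro x x' y y' l l' hx hy p ihx ihy ihq; exact hswap x x' y y' l l' hx hy p ihx ihy ihq
    · intro l₁ l₂ l₃ p q hp hq; exact htrans l₁ l₂ l₃ p q hp hq
  · intro l l' h
    refine NListPerm.rec (motive_1 := fun x y _ => P x y) (motive_2 := fun l l' _ => Q l l')
      ?_ ?_ ?_ ?_ ?_ ?_ ?_ h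
    · exact hfrm
    · intro l l' p hq; exact hplus l l' p hq
    · intro l l' p hq; exact htimes l l' p hq
    · exact hnil
    · intro x y l l' he p hp hq; exact hcons x y l l' he p hp hq
    · intro x x' y y' l l' hx hy p ihx ihy ihq; exact hswap x x' y y' l l' hx hy p ihx ihy ihq
    · intro l₁ l₂ l₃ p q hp hq; exact htrans l₁ l₂ l₃ p q hp hq

theorem nest_symm_aux :
    (∀ x y : Nest α, NestEq x y → NestEq y x) ∧
    (∀ l l' : List (Nest α), NListPerm l l' → NListPerm l' l) := by
  refine nest_mutual_ind ?_ ?_ ?_ ?_ ?_ ?_ ?_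
  · exact fun a => .frm a
  · exact fun l l' _ hq => .plus hq
  · exact fun l l' _ hq => .times hq
  · exact .nil
  · exact fun _ _ _ _ _ _ hp hq => .cons hp hq
  · exact fun _ _ _ _ _ _ _ _ _ hx hy hq => .swap hy hx hq
  · exact fun _ _ _ _ _ h1 h2 => .trans h2 h1

theorem nestEq_symm {x y : Nest α} (h : NestEq x y) : NestEq y x := nest_symm_aux.1 x y h
theorem nlistPerm_symm {l l' : List (Nest α)} (h : NListPerm l l') : NListPerm l' l :=
  nest_symm_aux.2 l l' h

theorem nestEq_trans : {x y z : Nest α} → NestEq x y → NestEq y z → NestEq x z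
  | _, _, _, .frm a, h => h
  | _, _, _, .plus p, .plus q => .plus (p.trans q)
  | _, _, _, .times p, .times q => .times (p.trans q)

theorem nest_single_aux :
    (∀ x y : Nest α, NestEq x y → True) ∧
    (∀ l l' : List (Nest α), NListPerm l l' →
      l.length = l'.length ∧ ∀ x y, l = [x] → l' = [y] → NestEq x y) := by
  refine nest_mutual_ind ?_ ?_ ?_ ?_ ?_ ?_ ?_
  · intro a; trivial
  · intro l l' _ _; trivial
  · intro l l' _ _; trivial
  · exact ⟨rfl, by intro x y h; cases h⟩
  · intro x y l l' he p _ hq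
    refine ⟨by simp [hq.1], ?_⟩
    intro a b ha hb
    cases ha; cases hb; exact he
  · intro x x' y y' l l' _ _ _ _ _ hq
    exact ⟨by simp [hq.1], by intro a b h; cases h⟩
  · intro l₁ l₂ l₃ _ _ h1 h2
    refine ⟨h1.1.trans h2.1, ?_⟩
    intro x y hx hy
    subst hx; subst hy
    have : l₂.length = 1 := by rw [← h1.1]; rfl
    obtain ⟨z, hz⟩ := List.length_eq_one_iff.mp this
    exact nestEq_trans (h1.2 x z rfl hz) (h2.2 z y hz rfl)

theorem nlistPerm_length {l l' : List (Nest α)} (p : NListPerm l l') :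
    l.length = l'.length := (nest_single_aux.2 l l' p).1

theorem nlistPerm_single {x y : Nest α} (p : NListPerm [x] [y]) : NestEq x y :=
  (nest_single_aux.2 _ _ p).2 x y rfl rfl

theorem perm_nlistPerm {l l' : List (Nest α)} (p : l.Perm l') : NListPerm l l' := by
  induction p with
  | nil => exact .nil
  | cons x _ ih => exact .cons (nestEq_refl x) ih
  | swap x y l => exact .swap (nestEq_refl y) (nestEq_refl x) (nlistPerm_refl l)
  | trans _ _ ih1 ih2 => exact .trans ih1 ih2

theorem nlistPerm_append_aux :
    (∀ x y : Nest α, NestEq x y → True) ∧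
    (∀ a b : List (Nest α), NListPerm a b →
      ∀ c d, NListPerm c d → NListPerm (a ++ c) (b ++ d)) := by
  refine nest_mutual_ind ?_ ?_ ?_ ?_ ?_ ?_ ?_
  · intro a; trivial
  · intro l l' _ _; trivial
  · intro l l' _ _; trivial
  · intro c d q; exact q
  · intro x y l l' he _ _ hq c d q; exact .cons he (hq c d q)
  · intro x x' y y' l l' hx hy _ _ _ hq c d q; exact .swap hx hy (hq c d q)
  · intro l₁ l₂ l₃ _ _ h1 h2 c d q
    exact .trans (h1 c c (nlistPerm_refl c)) (h2 c d q)

theorem nlistPerm_append {a b c d : List (Nest α)} (p : NListPerm a b)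
    (q : NListPerm c d) : NListPerm (a ++ c) (b ++ d) :=
  nlistPerm_append_aux.2 a b p c d q

/-! ### `plusMk`/`timesMk` and the smart constructors -/

def plusMk (l : List (Nest α)) : Nest α := match l with | [x] => x | _ => .plus l
def timesMk (l : List (Nest α)) : Nest α := match l with | [x] => x | _ => .times l

theorem nplus_eq (l : List (Nest α)) : nplus l = plusMk (l.flatMap Nest.flatP) := by
  unfold nplus plusMk
  rcases l.flatMap Nest.flatP with _ | ⟨x, _ | _⟩ <;> rfl

theorem ntimes_eq (l : List (Nest α)) : ntimes l = timesMk (l.flatMap Nest.flatT) := by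
  unfold ntimes timesMk
  rcases l.flatMap Nest.flatT with _ | ⟨x, _ | _⟩ <;> rfl

theorem plusMk_of_ne {l : List (Nest α)} (h : l.length ≠ 1) : plusMk l = .plus l := by
  unfold plusMk
  rcases l with _ | ⟨x, _ | _⟩ <;> simp_all

theorem timesMk_of_ne {l : List (Nest α)} (h : l.length ≠ 1) : timesMk l = .times l := by
  unfold timesMk
  rcases l with _ | ⟨x, _ | _⟩ <;> simp_all

theorem nestEq_plusMk {l l' : List (Nest α)} (p : NListPerm l l') :
    NestEq (plusMk l) (plusMk l') := by
  by_cases h : l.length = 1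
  · obtain ⟨x, rfl⟩ := List.length_eq_one_iff.mp h
    have h' := nlistPerm_length p
    simp at h'
    obtain ⟨y, rfl⟩ := List.length_eq_one_iff.mp h'.symm
    exact nlistPerm_single p
  · have h' : l'.length ≠ 1 := by rw [← nlistPerm_length p]; exact h
    rw [plusMk_of_ne h, plusMk_of_ne h']
    exact .plus p

theorem nestEq_timesMk {l l' : List (Nest α)} (p : NListPerm l l') :
    NestEq (timesMk l) (timesMk l') := by
  by_cases h : l.length = 1
  · obtain ⟨x, rfl⟩ := List.length_eq_one_iff.mp h
    have h' := nlistPerm_length p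
    simp at h'
    obtain ⟨y, rfl⟩ := List.length_eq_one_iff.mp h'.symm
    exact nlistPerm_single p
  · have h' : l'.length ≠ 1 := by rw [← nlistPerm_length p]; exact h
    rw [timesMk_of_ne h, timesMk_of_ne h']
    exact .times p

/-! ### `WF` facts -/

theorem flatP_wf {x : Nest α} (h : x.WF) : ∀ y ∈ x.flatP, y.WF ∧ y.notPlusRoot := by
  cases h with
  | frm a => intro y hy; simp [Nest.flatP] at hy; subst hy; exact ⟨.frm a, trivial⟩
  | plus h1 h2 h3 => intro y hy; simp [Nest.flatP] at hy; exact ⟨h2 y hy, h3 y hy⟩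
  | times h1 h2 h3 =>
    intro y hy; simp [Nest.flatP] at hy; subst hy
    exact ⟨.times h1 h2 h3, trivial⟩

theorem flatT_wf {x : Nest α} (h : x.WF) : ∀ y ∈ x.flatT, y.WF ∧ y.notTimesRoot := by
  cases h with
  | frm a => intro y hy; simp [Nest.flatT] at hy; subst hy; exact ⟨.frm a, trivial⟩
  | times h1 h2 h3 => intro y hy; simp [Nest.flatT] at hy; exact ⟨h2 y hy, h3 y hy⟩
  | plus h1 h2 h3 =>
    intro y hy; simp [Nest.flatT] at hy; subst hy
    exact ⟨.plus h1 h2 h3, trivial⟩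

theorem flatP_of_not {x : Nest α} (h : x.notPlusRoot) : x.flatP = [x] := by
  cases x <;> simp_all [Nest.flatP, Nest.notPlusRoot]

theorem flatT_of_not {x : Nest α} (h : x.notTimesRoot) : x.flatT = [x] := by
  cases x <;> simp_all [Nest.flatT, Nest.notTimesRoot]

theorem plusMk_flatP {x : Nest α} (h : x.WF) : plusMk x.flatP = x := by
  cases h with
  | frm a => rfl
  | plus h1 h2 h3 => simp only [Nest.flatP]; exact plusMk_of_ne h1
  | times h1 h2 h3 => rfl

theorem timesMk_flatT {x : Nest α} (h : x.WF) : timesMk x.flatT = x := by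
  cases h with
  | frm a => rfl
  | times h1 h2 h3 => simp only [Nest.flatT]; exact timesMk_of_ne h1
  | plus h1 h2 h3 => rfl

theorem nplus_single {x : Nest α} (h : x.WF) : nplus [x] = x := by
  rw [nplus_eq]; simp only [List.flatMap_cons, List.flatMap_nil, List.append_nil]
  exact plusMk_flatP h

theorem ntimes_single {x : Nest α} (h : x.WF) : ntimes [x] = x := by
  rw [ntimes_eq]; simp only [List.flatMap_cons, List.flatMap_nil, List.append_nil]
  exact timesMk_flatT h

theorem nplus_spec {l : List (Nest α)} (h : ∀ x ∈ l, x.WF) :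
    (nplus l).WF ∧ (nplus l).flatP = l.flatMap Nest.flatP := by
  have hL : ∀ y ∈ l.flatMap Nest.flatP, y.WF ∧ y.notPlusRoot := by
    intro y hy
    simp only [List.mem_flatMap] at hy
    obtain ⟨x, hx, hy⟩ := hy
    exact flatP_wf (h x hx) y hy
  rw [nplus_eq]
  rcases hh : l.flatMap Nest.flatP with _ | ⟨x, _ | ⟨y, r⟩⟩
  · exact ⟨.plus (by simp) (by simp) (by simp), rfl⟩
  · have := hL x (by simp [hh])
    exact ⟨this.1, flatP_of_not this.2⟩
  · rw [plusMk_of_ne (by simp)]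
    refine ⟨.plus (by simp) ?_ ?_, rfl⟩ <;>
      (intro z hz; have := hL z (by rw [hh]; exact hz))
    · exact this.1
    · exact this.2

theorem ntimes_spec {l : List (Nest α)} (h : ∀ x ∈ l, x.WF) :
    (ntimes l).WF ∧ (ntimes l).flatT = l.flatMap Nest.flatT := by
  have hL : ∀ y ∈ l.flatMap Nest.flatT, y.WF ∧ y.notTimesRoot := by
    intro y hy
    simp only [List.mem_flatMap] at hy
    obtain ⟨x, hx, hy⟩ := hy
    exact flatT_wf (h x hx) y hy
  rw [ntimes_eq]
  rcases hh : l.flatMap Nest.flatT with _ | ⟨x, _ | ⟨y, r⟩⟩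
  · exact ⟨.times (by simp) (by simp) (by simp), rfl⟩
  · have := hL x (by simp [hh])
    exact ⟨this.1, flatT_of_not this.2⟩
  · rw [timesMk_of_ne (by simp)]
    refine ⟨.times (by simp) ?_ ?_, rfl⟩ <;>
      (intro z hz; have := hL z (by rw [hh]; exact hz))
    · exact this.1
    · exact this.2

end Aux
section Bunch

/-! ### `addParts` / `mulParts` / `eta` facts -/

theorem bunch_facts : ∀ Δ : Bunch, (∀ x ∈ addParts Δ, x.WF) ∧ (∀ x ∈ mulParts Δ, x.WF) ∧
    nplus (addParts Δ) = eta Δ ∧ ntimes (mulParts Δ) = eta Δ := by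
  intro Δ
  induction Δ with
  | frm φ =>
    refine ⟨by simp [addParts]; exact .frm φ, by simp [mulParts]; exact .frm φ, ?_, ?_⟩
    · exact nplus_single (.frm φ)
    · exact ntimes_single (.frm φ)
  | eplus =>
    refine ⟨by simp [addParts], ?_, ?_, ?_⟩
    · simp [mulParts]; exact .plus (by simp) (by simp) (by simp)
    · rfl
    · exact ntimes_single (.plus (by simp) (by simp) (by simp))
  | etimes =>
    refine ⟨?_, by simp [mulParts], ?_, ?_⟩
    · simp [addParts]; exact .times (by simp) (by simp) (by simp)
    · exact nplus_single (.times (by simp) (by simp) (by simp))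
    · rfl
  | semi Δ₁ Δ₂ ih1 ih2 =>
    have hwf : ∀ x ∈ addParts Δ₁ ++ addParts Δ₂, x.WF := by
      intro x hx
      rcases List.mem_append.mp hx with h | h
      · exact ih1.1 x h
      · exact ih2.1 x h
    have hn : (nplus (addParts Δ₁ ++ addParts Δ₂)).WF := (nplus_spec hwf).1
    refine ⟨hwf, by simp [mulParts]; exact hn, ?_, ?_⟩
    · rfl
    · show ntimes [nplus (addParts Δ₁ ++ addParts Δ₂)] = _
      rw [ntimes_single hn]; rfl
  | comma Δ₁ Δ₂ ih1 ih2 =>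
    have hwf : ∀ x ∈ mulParts Δ₁ ++ mulParts Δ₂, x.WF := by
      intro x hx
      rcases List.mem_append.mp hx with h | h
      · exact ih1.2.1 x h
      · exact ih2.2.1 x h
    have hn : (ntimes (mulParts Δ₁ ++ mulParts Δ₂)).WF := (ntimes_spec hwf).1
    refine ⟨by simp [addParts]; exact hn, hwf, ?_, ?_⟩
    · show nplus [ntimes (mulParts Δ₁ ++ mulParts Δ₂)] = _
      rw [nplus_single hn]; rfl
    · rfl

theorem addParts_wf (Δ : Bunch) : ∀ x ∈ addParts Δ, x.WF := (bunch_facts Δ).1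
theorem mulParts_wf (Δ : Bunch) : ∀ x ∈ mulParts Δ, x.WF := (bunch_facts Δ).2.1
theorem nplus_addParts (Δ : Bunch) : nplus (addParts Δ) = eta Δ := (bunch_facts Δ).2.2.1
theorem ntimes_mulParts (Δ : Bunch) : ntimes (mulParts Δ) = eta Δ := (bunch_facts Δ).2.2.2

theorem addParts_flat (Δ : Bunch) :
    (addParts Δ).flatMap Nest.flatP = (eta Δ).flatP := by
  rw [← (nplus_spec (addParts_wf Δ)).2, nplus_addParts]

theorem mulParts_flat (Δ : Bunch) :
    (mulParts Δ).flatMap Nest.flatT = (eta Δ).flatT := by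
  rw [← (ntimes_spec (mulParts_wf Δ)).2, ntimes_mulParts]

theorem flatP_nlistPerm {x y : Nest Formula} (h : NestEq x y) :
    NListPerm x.flatP y.flatP := by
  cases h with
  | frm a => exact nlistPerm_refl _
  | plus p => exact p
  | times p => exact .cons (.times p) .nil

theorem flatT_nlistPerm {x y : Nest Formula} (h : NestEq x y) :
    NListPerm x.flatT y.flatT := by
  cases h with
  | frm a => exact nlistPerm_refl _
  | times p => exact p
  | plus p => exact .cons (.plus p) .nil

/-! ### Forward direction -/

theorem eta_congr {Δ Δ' : Bunch} (h : NestEq (eta Δ) (eta Δ')) :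
    ∀ C : BCtx, NestEq (eta (C.fill Δ)) (eta (C.fill Δ')) := by
  intro C
  induction C with
  | hole => exact h
  | semiL C Δ₀ ih =>
    show NestEq (nplus (addParts (C.fill Δ) ++ addParts Δ₀))
      (nplus (addParts (C.fill Δ') ++ addParts Δ₀))
    rw [nplus_eq, nplus_eq, List.flatMap_append, List.flatMap_append]
    simp only [addParts_flat]
    exact nestEq_plusMk (nlistPerm_append (flatP_nlistPerm ih) (nlistPerm_refl _))
  | semiR Δ₀ C ih =>
    show NestEq (nplus (addParts Δ₀ ++ addParts (C.fill Δ)))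
      (nplus (addParts Δ₀ ++ addParts (C.fill Δ')))
    rw [nplus_eq, nplus_eq, List.flatMap_append, List.flatMap_append]
    simp only [addParts_flat]
    exact nestEq_plusMk (nlistPerm_append (nlistPerm_refl _) (flatP_nlistPerm ih))
  | commaL C Δ₀ ih =>
    show NestEq (ntimes (mulParts (C.fill Δ) ++ mulParts Δ₀))
      (ntimes (mulParts (C.fill Δ') ++ mulParts Δ₀))
    rw [ntimes_eq, ntimes_eq, List.flatMap_append, List.flatMap_append]
    simp only [mulParts_flat]
    exact nestEq_timesMk (nlistPerm_append (flatT_nlistPerm ih) (nlistPerm_refl _))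
  | commaR Δ₀ C ih =>
    show NestEq (ntimes (mulParts Δ₀ ++ mulParts (C.fill Δ)))
      (ntimes (mulParts Δ₀ ++ mulParts (C.fill Δ')))
    rw [ntimes_eq, ntimes_eq, List.flatMap_append, List.flatMap_append]
    simp only [mulParts_flat]
    exact nestEq_timesMk (nlistPerm_append (nlistPerm_refl _) (flatT_nlistPerm ih))

theorem eta_forward {Δ Δ' : Bunch} (h : BEquiv Δ Δ') : NestEq (eta Δ) (eta Δ') := by
  induction h with
  | refl Δ => exact nestEq_refl _
  | symm _ ih => exact nestEq_symm ih
  | trans _ _ ih1 ih2 => exact nestEq_trans ih1 ih2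
  | semiComm Δ₁ Δ₂ =>
    show NestEq (nplus (addParts Δ₁ ++ addParts Δ₂)) (nplus (addParts Δ₂ ++ addParts Δ₁))
    rw [nplus_eq, nplus_eq]
    exact nestEq_plusMk (perm_nlistPerm ((List.perm_append_comm).flatMap_right _))
  | semiAssoc Δ₁ Δ₂ Δ₃ =>
    show NestEq (nplus ((addParts Δ₁ ++ addParts Δ₂) ++ addParts Δ₃))
      (nplus (addParts Δ₁ ++ (addParts Δ₂ ++ addParts Δ₃)))
    rw [List.append_assoc]
    exact nestEq_refl _
  | semiUnit Δ =>
    show NestEq (nplus (addParts Δ ++ [])) (eta Δ)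
    rw [List.append_nil, nplus_addParts]
    exact nestEq_refl _
  | commaComm Δ₁ Δ₂ =>
    show NestEq (ntimes (mulParts Δ₁ ++ mulParts Δ₂)) (ntimes (mulParts Δ₂ ++ mulParts Δ₁))
    rw [ntimes_eq, ntimes_eq]
    exact nestEq_timesMk (perm_nlistPerm ((List.perm_append_comm).flatMap_right _))
  | commaAssoc Δ₁ Δ₂ Δ₃ =>
    show NestEq (ntimes ((mulParts Δ₁ ++ mulParts Δ₂) ++ mulParts Δ₃))
      (ntimes (mulParts Δ₁ ++ (mulParts Δ₂ ++ mulParts Δ₃)))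
    rw [List.append_assoc]
    exact nestEq_refl _
  | commaUnit Δ =>
    show NestEq (ntimes (mulParts Δ ++ [])) (eta Δ)
    rw [List.append_nil, ntimes_mulParts]
    exact nestEq_refl _
  | congr C _ ih => exact eta_congr ih C

end Bunch
section Beta

/-! ### `BEquiv` helpers -/

theorem BEquiv.semiCongr {a a' b b' : Bunch} (h1 : BEquiv a a') (h2 : BEquiv b b') :
    BEquiv (.semi a b) (.semi a' b') :=
  .trans (.congr (.semiL .hole b) h1) (.congr (.semiR a' .hole) h2)

theorem BEquiv.commaCongr {a a' b b' : Bunch} (h1 : BEquiv a a') (h2 : BEquiv b b') :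
    BEquiv (.comma a b) (.comma a' b') :=
  .trans (.congr (.commaL .hole b) h1) (.congr (.commaR a' .hole) h2)

theorem BEquiv.semiSwap (a b c : Bunch) :
    BEquiv (.semi a (.semi b c)) (.semi b (.semi a c)) :=
  .trans (.symm (.semiAssoc a b c))
    (.trans (.congr (.semiL .hole c) (.semiComm a b)) (.semiAssoc b a c))

theorem BEquiv.commaSwap (a b c : Bunch) :
    BEquiv (.comma a (.comma b c)) (.comma b (.comma a c)) :=
  .trans (.symm (.commaAssoc a b c))
    (.trans (.congr (.commaL .hole c) (.commaComm a b)) (.commaAssoc b a c))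

/-! ### `beta` facts -/

theorem betaP_cons (x : Nest Formula) (xs : List (Nest Formula)) :
    BEquiv (betaP (x :: xs)) (.semi (beta x) (betaP xs)) := by
  cases xs with
  | nil => exact .symm (.semiUnit (beta x))
  | cons y ys => exact .refl _

theorem betaT_cons (x : Nest Formula) (xs : List (Nest Formula)) :
    BEquiv (betaT (x :: xs)) (.comma (beta x) (betaT xs)) := by
  cases xs with
  | nil => exact .symm (.commaUnit (beta x))
  | cons y ys => exact .refl _

theorem betaP_append (a b : List (Nest Formula)) :
    BEquiv (betaP (a ++ b)) (.semi (betaP a) (betaP b)) := by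
  induction a with
  | nil =>
    exact .symm (.trans (.semiComm _ _) (.semiUnit _))
  | cons x xs ih =>
    show BEquiv (betaP (x :: (xs ++ b))) _
    refine .trans (betaP_cons x (xs ++ b)) ?_
    refine .trans (.semiCongr (.refl (beta x)) ih) ?_
    refine .trans (.symm (.semiAssoc (beta x) (betaP xs) (betaP b))) ?_
    exact .semiCongr (.symm (betaP_cons x xs)) (.refl _)

theorem betaT_append (a b : List (Nest Formula)) :
    BEquiv (betaT (a ++ b)) (.comma (betaT a) (betaT b)) := by
  induction a with
  | nil =>
    exact .symm (.trans (.commaComm _ _) (.commaUnit _))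
  | cons x xs ih =>
    show BEquiv (betaT (x :: (xs ++ b))) _
    refine .trans (betaT_cons x (xs ++ b)) ?_
    refine .trans (.commaCongr (.refl (beta x)) ih) ?_
    refine .trans (.symm (.commaAssoc (beta x) (betaT xs) (betaT b))) ?_
    exact .commaCongr (.symm (betaT_cons x xs)) (.refl _)

theorem betaP_flatP (x : Nest Formula) : BEquiv (betaP x.flatP) (beta x) := by
  cases x <;> exact .refl _

theorem betaT_flatT (x : Nest Formula) : BEquiv (betaT x.flatT) (beta x) := by
  cases x <;> exact .refl _

theorem betaP_flatMap (l : List (Nest Formula)) :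
    BEquiv (betaP (l.flatMap Nest.flatP)) (betaP l) := by
  induction l with
  | nil => exact .refl _
  | cons x xs ih =>
    show BEquiv (betaP (x.flatP ++ xs.flatMap Nest.flatP)) _
    refine .trans (betaP_append _ _) ?_
    refine .trans (.semiCongr (betaP_flatP x) ih) ?_
    exact .symm (betaP_cons x xs)

theorem betaT_flatMap (l : List (Nest Formula)) :
    BEquiv (betaT (l.flatMap Nest.flatT)) (betaT l) := by
  induction l with
  | nil => exact .refl _
  | cons x xs ih =>
    show BEquiv (betaT (x.flatT ++ xs.flatMap Nest.flatT)) _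
    refine .trans (betaT_append _ _) ?_
    refine .trans (.commaCongr (betaT_flatT x) ih) ?_
    exact .symm (betaT_cons x xs)

theorem beta_plusMk (l : List (Nest Formula)) : beta (plusMk l) = betaP l := by
  unfold plusMk
  rcases l with _ | ⟨x, _ | _⟩ <;> rfl

theorem beta_timesMk (l : List (Nest Formula)) : beta (timesMk l) = betaT l := by
  unfold timesMk
  rcases l with _ | ⟨x, _ | _⟩ <;> rfl

theorem beta_nplus (l : List (Nest Formula)) : BEquiv (beta (nplus l)) (betaP l) := by
  rw [nplus_eq, beta_plusMk]
  exact betaP_flatMap l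

theorem beta_ntimes (l : List (Nest Formula)) : BEquiv (beta (ntimes l)) (betaT l) := by
  rw [ntimes_eq, beta_timesMk]
  exact betaT_flatMap l

/-! ### `β ∘ η` is the identity up to `≡` -/

theorem bunch_beta : ∀ Δ : Bunch,
    BEquiv Δ (betaP (addParts Δ)) ∧ BEquiv Δ (betaT (mulParts Δ)) := by
  intro Δ
  induction Δ with
  | frm φ => exact ⟨.refl _, .refl _⟩
  | eplus => exact ⟨.refl _, .refl _⟩
  | etimes => exact ⟨.refl _, .refl _⟩
  | semi Δ₁ Δ₂ ih1 ih2 =>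
    have h : BEquiv (.semi Δ₁ Δ₂) (betaP (addParts Δ₁ ++ addParts Δ₂)) :=
      .trans (.semiCongr ih1.1 ih2.1) (.symm (betaP_append _ _))
    refine ⟨h, ?_⟩
    show BEquiv _ (betaT [nplus (addParts Δ₁ ++ addParts Δ₂)])
    exact .trans h (.symm (beta_nplus _))
  | comma Δ₁ Δ₂ ih1 ih2 =>
    have h : BEquiv (.comma Δ₁ Δ₂) (betaT (mulParts Δ₁ ++ mulParts Δ₂)) :=
      .trans (.commaCongr ih1.2 ih2.2) (.symm (betaT_append _ _))
    refine ⟨?_, h⟩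
    show BEquiv _ (betaP [ntimes (mulParts Δ₁ ++ mulParts Δ₂)])
    exact .trans h (.symm (beta_ntimes _))

theorem beta_eta (Δ : Bunch) : BEquiv (beta (eta Δ)) Δ := by
  cases Δ with
  | frm φ => exact .refl _
  | eplus => exact .refl _
  | etimes => exact .refl _
  | semi Δ₁ Δ₂ =>
    show BEquiv (beta (nplus (addParts Δ₁ ++ addParts Δ₂))) _
    refine .trans (beta_nplus _) (.symm ?_)
    exact (bunch_beta (.semi Δ₁ Δ₂)).1
  | comma Δ₁ Δ₂ =>
    show BEquiv (beta (ntimes (mulParts Δ₁ ++ mulParts Δ₂))) _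
    refine .trans (beta_ntimes _) (.symm ?_)
    exact (bunch_beta (.comma Δ₁ Δ₂)).2

/-! ### `NestEq` implies `BEquiv` of the `β`-translations -/

theorem beta_nestEq_aux :
    (∀ x y : Nest Formula, NestEq x y → BEquiv (beta x) (beta y)) ∧
    (∀ l l' : List (Nest Formula), NListPerm l l' →
      BEquiv (betaP l) (betaP l') ∧ BEquiv (betaT l) (betaT l')) := by
  refine nest_mutual_ind ?_ ?_ ?_ ?_ ?_ ?_ ?_
  · intro a; exact .refl _
  · intro l l' _ hq; exact hq.1
  · intro l l' _ hq; exact hq.2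
  · exact ⟨.refl _, .refl _⟩
  · intro x y l l' _ _ hp hq
    constructor
    · refine .trans (betaP_cons x l) (.trans (.semiCongr hp hq.1) (.symm (betaP_cons y l')))
    · refine .trans (betaT_cons x l) (.trans (.commaCongr hp hq.2) (.symm (betaT_cons y l')))
  · intro x x' y y' l l' _ _ _ hx hy hq
    constructor
    · refine .trans (betaP_cons x (y :: l)) ?_
      refine .trans (.semiCongr (.refl _) (betaP_cons y l)) ?_
      refine .trans (.semiSwap _ _ _) ?_
      refine .trans (.semiCongr hy (.semiCongr hx hq.1)) ?_
      refine .trans (.semiCongr (.refl _) (.symm (betaP_cons x' l'))) ?_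
      exact .symm (betaP_cons y' (x' :: l'))
    · refine .trans (betaT_cons x (y :: l)) ?_
      refine .trans (.commaCongr (.refl _) (betaT_cons y l)) ?_
      refine .trans (.commaSwap _ _ _) ?_
      refine .trans (.commaCongr hy (.commaCongr hx hq.2)) ?_
      refine .trans (.commaCongr (.refl _) (.symm (betaT_cons x' l'))) ?_
      exact .symm (betaT_cons y' (x' :: l'))
  · intro l₁ l₂ l₃ _ _ h1 h2
    exact ⟨.trans h1.1 h2.1, .trans h1.2 h2.2⟩

theorem beta_nestEq {x y : Nest Formula} (h : NestEq x y) : BEquiv (beta x) (beta y) :=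
  beta_nestEq_aux.1 x y h

end Beta
/-- **Lemma 7.3**: two bunches are coherently equivalent if and only if their
nestifications are equal (as nested multisets, rendered here by `NestEq` on
the list representation): `Δ ≡ Δ'` iff `η(Δ) = η(Δ')`. -/
theorem equiv_iff_eta_eq (Δ Δ' : Bunch) : BEquiv Δ Δ' ↔ NestEq (eta Δ) (eta Δ') := by
  constructor
  · exact eta_forward
  · intro h
    exact .trans (.symm (beta_eta Δ)) (.trans (beta_nestEq h) (beta_eta Δ'))

end BIPaper
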